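/- Let X ⊆ ℙ(ℂ^{d+1}) be a σ-invariant subset and V ⊆ ℂ^{d+1} a real ℂ-subspace of dimension ℓ := d−k ≥ 1 such that X is hyperbolic with respect to V. Let V_0 ⊆ V be a real subspace with dim V_0 = ℓ−1, and let π = π_{V_0} be the projection π([x̂]) = [P_{V_0^⊥}(x̂)] ∈ ℙ(V_0^⊥) for x̂ ∉ V_0. Then the projected set π(X) ⊆ ℙ(V_0^⊥) is hyperbolic with respect to the real point π(V) := ℙ(V ∩ V_0^⊥): that is, π(V) ∉ π(X), and for every real 2-dimensional subspace U' of V_0^⊥ containing V ∩ V_0^⊥ (i.e., every real projective line through π(V)), every point of π(X) ∩ ℙ(U') is real. (Corollary 3.4, the hyperbolicity assertion.) -/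

import Mathlib

/-!
Points of `ℙ(ℂ^{d+1})` are modelled by their nonzero representative vectors, and subsets of
`ℙ(ℂ^{d+1})` by their cones: sets of nonzero vectors stable under multiplication by nonzero
scalars. `σ` is coordinatewise complex conjugation; a point `[x]` is real iff `σ(x)` is a
scalar multiple of `x`, and a `ℂ`-subspace `W` is real iff `σ(W) = W` (equivalently, `σ`
maps `W` into `W`, `σ` being an involution). `ℂ^{d+1}` carries the standard Hermitian inner
product (`EuclideanSpace`).
-/

noncomputable section

/-- `ℂ^{d+1}` with the standard Hermitian inner product. -/
abbrev EE (d : ℕ) : Type := EuclideanSpace ℂ (Fin (d + 1))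

/-- Coordinatewise complex conjugation `σ`. -/
def conjE {d : ℕ} (x : EE d) : EE d := WithLp.toLp 2 (fun i => (starRingEnd ℂ) (x i))

/-- `x` represents a real point of projective space: `σ(x)` is proportional to `x`. -/
def IsRealPt {d : ℕ} (x : EE d) : Prop := ∃ c : ℂ, conjE x = c • x

/-- A real (σ-invariant) `ℂ`-subspace. -/
def IsRealSub {d : ℕ} (V : Submodule ℂ (EE d)) : Prop := ∀ x ∈ V, conjE x ∈ V

/-- `X` is the cone over a subset of projective space: `0 ∉ X` and `X` is stable under
multiplication by nonzero scalars. -/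
def IsProjCone {d : ℕ} (X : Set (EE d)) : Prop :=
  (0 : EE d) ∉ X ∧ ∀ x ∈ X, ∀ c : ℂ, c ≠ 0 → c • x ∈ X

/-- `X` is σ-invariant. -/
def IsSigmaInv {d : ℕ} (X : Set (EE d)) : Prop := ∀ x ∈ X, conjE x ∈ X

/-- The projection from `ℙ(V₀)`: orthogonal projection onto `V₀ᗮ` (on cones). -/
def projPerp {d : ℕ} (V₀ : Submodule ℂ (EE d)) (x : EE d) : EE d :=
  (V₀ᗮ.orthogonalProjectionOnto x : EE d)

/-- `X` (a cone over a subset of `ℙ(W)`) is hyperbolic, within the ambient subspace `W`,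
with respect to the real subspace `V ≤ W`: `ℙ(V) ∩ X = ∅` and for every real subspace
`U` with `V ≤ U ≤ W` and `dim U = dim V + 1`, every point of `X ∩ ℙ(U)` is real. -/
def HyperbolicIn {d : ℕ} (W : Submodule ℂ (EE d)) (X : Set (EE d))
    (V : Submodule ℂ (EE d)) : Prop :=
  (∀ x ∈ X, x ∉ V) ∧
    ∀ U : Submodule ℂ (EE d), U ≤ W → V ≤ U →
      Module.finrank ℂ U = Module.finrank ℂ V + 1 →
      IsRealSub U → ∀ x ∈ X, x ∈ U → IsRealPt x

/-- Hyperbolicity in the full ambient space `ℙ(ℂ^{d+1})`. -/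
def Hyperbolic {d : ℕ} (X : Set (EE d)) (V : Submodule ℂ (EE d)) : Prop :=
  HyperbolicIn ⊤ X V

/-!
STATEMENT 10 (Corollary 3.4). Let `X ⊆ ℙ(ℂ^{d+1})` be σ-invariant and hyperbolic with
respect to the real subspace `V` of dimension `ℓ = d−k ≥ 1`. Let `V₀ ⊆ V` be real of
dimension `ℓ−1` and `π = π_{V₀}` the projection from `ℙ(V₀)` onto `ℙ(V₀ᗮ)`. Then `π(X)`
is hyperbolic with respect to the real point `π(V) = ℙ(V ∩ V₀ᗮ)`: `π(V) ∉ π(X)`, and for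
every real 2-dimensional subspace `U'` of `V₀ᗮ` containing `V ∩ V₀ᗮ` (i.e. every real
projective line through `π(V)`), every point of `π(X) ∩ ℙ(U')` is real.
-/

/-!
A point `π(x)` of `π(X)` on a real line `ℙ(U')` through `π(V)` lifts to the point `x` of `X`
in the real subspace `V₀ ⊕ U'`. That subspace contains `V = V₀ ⊕ (V ∩ V₀ᗮ)` and has dimension
`dim V + 1`, so hyperbolicity of `X` makes `x` real; and orthogonal projection along a real
subspace commutes with `σ`, so `π(x)` is real as well.
-/

namespace Submodule

open Module

variable {𝕜 E : Type*} [RCLike 𝕜] [NormedAddCommGroup E] [InnerProductSpace 𝕜 E]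

theorem mem_sup_of_starProjection_orthogonal_mem {K U : Submodule 𝕜 E}
    [K.HasOrthogonalProjection] {x : E} (h : Kᗮ.starProjection x ∈ U) : x ∈ K ⊔ U := by
  rw [← K.starProjection_add_starProjection_orthogonal x]
  exact add_mem_sup (K.starProjection_apply_mem x) h

theorem starProjection_orthogonal_mem_inf {K V : Submodule 𝕜 E} [K.HasOrthogonalProjection]
    (hKV : K ≤ V) {v : E} (hv : v ∈ V) : Kᗮ.starProjection v ∈ V ⊓ Kᗮ := by
  refine ⟨?_, Kᗮ.starProjection_apply_mem v⟩
  rw [starProjection_orthogonal_val]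
  exact V.sub_mem hv (hKV (K.starProjection_apply_mem v))

theorem finrank_sup_of_le_orthogonal [FiniteDimensional 𝕜 E] {K U : Submodule 𝕜 E}
    (h : U ≤ Kᗮ) : finrank 𝕜 ↥(K ⊔ U) = finrank 𝕜 K + finrank 𝕜 U := by
  rw [← finrank_sup_add_finrank_inf_eq, (isOrtho_iff_le.2 h).disjoint.symm.eq_bot, finrank_bot,
    add_zero]

end Submodule

section Conjugation

variable {d : ℕ}

lemma conjE_add (x y : EE d) : conjE (x + y) = conjE x + conjE y := by
  ext i; simp [conjE]

lemma conjE_sub (x y : EE d) : conjE (x - y) = conjE x - conjE y := by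
  ext i; simp [conjE]

lemma inner_conjE (x y : EE d) : inner ℂ x (conjE y) = starRingEnd ℂ (inner ℂ (conjE x) y) := by
  simp [PiLp.inner_apply, conjE, mul_comm]

lemma IsRealSub.orthogonal {V : Submodule ℂ (EE d)} (hV : IsRealSub V) : IsRealSub Vᗮ := by
  intro y hy
  rw [Submodule.mem_orthogonal] at hy ⊢
  intro u hu
  rw [inner_conjE, hy _ (hV u hu), map_zero]

lemma IsRealSub.sup {V W : Submodule ℂ (EE d)} (hV : IsRealSub V) (hW : IsRealSub W) :
    IsRealSub (V ⊔ W) := by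
  intro z hz
  obtain ⟨a, ha, b, hb, rfl⟩ := Submodule.mem_sup.1 hz
  rw [conjE_add]
  exact Submodule.add_mem_sup (hV a ha) (hW b hb)

lemma conjE_starProjection {V : Submodule ℂ (EE d)} (hV : IsRealSub V) (x : EE d) :
    conjE (V.starProjection x) = V.starProjection (conjE x) := by
  symm
  apply Submodule.eq_starProjection_of_mem_orthogonal (hV _ (V.starProjection_apply_mem x))
  rw [← conjE_sub]
  exact hV.orthogonal _ (V.sub_starProjection_mem_orthogonal x)

lemma IsRealPt.starProjection {V : Submodule ℂ (EE d)} (hV : IsRealSub V) {x : EE d}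
    (hx : IsRealPt x) : IsRealPt (V.starProjection x) := by
  obtain ⟨c, hc⟩ := hx
  exact ⟨c, by rw [conjE_starProjection hV, hc, map_smul]⟩

lemma projPerp_eq (V₀ : Submodule ℂ (EE d)) : projPerp V₀ = V₀ᗮ.starProjection :=
  rfl

end Conjugation

theorem stmt10_general (d ℓ : ℕ) (hℓ1 : 1 ≤ ℓ)
    (X : Set (EE d))
    (V : Submodule ℂ (EE d))
    (hVdim : Module.finrank ℂ V = ℓ)
    (hhyp : Hyperbolic X V)
    (V₀ : Submodule ℂ (EE d)) (hV₀le : V₀ ≤ V) (hV₀real : IsRealSub V₀)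
    (hV₀dim : Module.finrank ℂ V₀ = ℓ - 1) :
    (∀ y ∈ projPerp V₀ '' X, y ∉ V ⊓ V₀ᗮ) ∧
      ∀ U' : Submodule ℂ (EE d), U' ≤ V₀ᗮ → V ⊓ V₀ᗮ ≤ U' →
        Module.finrank ℂ U' = 2 → IsRealSub U' →
        ∀ y ∈ projPerp V₀ '' X, y ∈ U' → IsRealPt y := by
  rw [projPerp_eq]
  refine ⟨?_, ?_⟩
  · rintro _ ⟨x, hx, rfl⟩ hy
    exact hhyp.1 x hx
      (sup_le hV₀le inf_le_left (Submodule.mem_sup_of_starProjection_orthogonal_mem hy))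
  · rintro U' hU'le hVU' hU'dim hU'real _ ⟨x, hx, rfl⟩ hy
    have hVU : V ≤ V₀ ⊔ U' := fun v hv => Submodule.mem_sup_of_starProjection_orthogonal_mem
      (hVU' (Submodule.starProjection_orthogonal_mem_inf hV₀le hv))
    have hdim : Module.finrank ℂ ↥(V₀ ⊔ U') = Module.finrank ℂ V + 1 := by
      rw [Submodule.finrank_sup_of_le_orthogonal hU'le, hV₀dim, hU'dim, hVdim]
      omega
    have hxreal := hhyp.2 _ le_top hVU hdim (hV₀real.sup hU'real) x hx
      (Submodule.mem_sup_of_starProjection_orthogonal_mem hy)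
    exact hxreal.starProjection hV₀real.orthogonal

theorem stmt10 (d ℓ : ℕ) (hℓ1 : 1 ≤ ℓ) (hℓ2 : ℓ ≤ d)
    (X : Set (EE d)) (hXcone : IsProjCone X) (hXσ : IsSigmaInv X)
    (V : Submodule ℂ (EE d)) (hVreal : IsRealSub V)
    (hVdim : Module.finrank ℂ V = ℓ)
    (hhyp : Hyperbolic X V)
    (V₀ : Submodule ℂ (EE d)) (hV₀le : V₀ ≤ V) (hV₀real : IsRealSub V₀)
    (hV₀dim : Module.finrank ℂ V₀ = ℓ - 1) :
    (∀ y ∈ projPerp V₀ '' X, y ∉ V ⊓ V₀ᗮ) ∧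
      ∀ U' : Submodule ℂ (EE d), U' ≤ V₀ᗮ → V ⊓ V₀ᗮ ≤ U' →
        Module.finrank ℂ U' = 2 → IsRealSub U' →
        ∀ y ∈ projPerp V₀ '' X, y ∈ U' → IsRealPt y :=
  stmt10_general d ℓ hℓ1 X V hVdim hhyp V₀ hV₀le hV₀real hV₀dim
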